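/- (Lemma 1, deterministic form with CSBM aggregated means.) Suppose E is additionally a real inner product space, let σ > 0, k ≥ 0, set ρ := ‖μ₁ − μ₂‖ and r := ∑_m (w m)·(p m − q m). Fix L ≥ 1, subgroup indices i, j ∈ M, and features f_u, f_v ∈ E such that ‖f_u − μ⁽ᴸ⁾_{c,i}‖ ≤ ρ + kσ and ‖f_v − μ⁽ᴸ⁾_{c,j}‖ ≤ ρ + kσ for both classes c ∈ {1,2}. Then the difference of Gaussian class-1 posteriors satisfies |P_σ(f_u; μ⁽ᴸ⁾₁ᵢ, μ⁽ᴸ⁾₂ᵢ) − P_σ(f_v; μ⁽ᴸ⁾₁ⱼ, μ⁽ᴸ⁾₂ⱼ)| ≤ (2(ρ + kσ)/σ²) · (‖f_u − f_v‖ + ρ · |p i − p j| · |r|^(L−1)). -/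
import Mathlib


open scoped BigOperators

/-- CSBM-Subgroup mean recursion: `(csbmMu μ1 μ2 w p L i).1` is the class-1 mean
`μ⁽ᴸ⁾₁ᵢ` and `(csbmMu μ1 μ2 w p L i).2` is the class-2 mean `μ⁽ᴸ⁾₂ᵢ` of the
`L`-hop aggregated features of subgroup `i`. -/
noncomputable def csbmMu {E : Type*} [AddCommGroup E] [Module ℝ E]
    {M : Type*} [Fintype M] (μ1 μ2 : E) (w p : M → ℝ) : ℕ → M → E × E
  | 0, _ => (μ1, μ2)
  | L + 1, i =>
      (p i • ∑ m, w m • (csbmMu μ1 μ2 w p L m).1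
          + (1 - p i) • ∑ m, w m • (csbmMu μ1 μ2 w p L m).2,
       (1 - p i) • ∑ m, w m • (csbmMu μ1 μ2 w p L m).1
          + p i • ∑ m, w m • (csbmMu μ1 μ2 w p L m).2)

/-- Gaussian two-class posterior: the probability that feature `f` was drawn from the
Gaussian with mean `a` rather than mean `b` (common isotropic variance `σ²`, equal priors). -/
noncomputable def gaussPosterior {E : Type*} [NormedAddCommGroup E]
    [InnerProductSpace ℝ E] (σ : ℝ) (f a b : E) : ℝ :=
  Real.exp (-‖f - a‖ ^ 2 / (2 * σ ^ 2)) /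
    (Real.exp (-‖f - a‖ ^ 2 / (2 * σ ^ 2)) + Real.exp (-‖f - b‖ ^ 2 / (2 * σ ^ 2)))

open scoped RealInnerProductSpace

lemma sigLip (s t : ℝ) : |1/(1+Real.exp s) - 1/(1+Real.exp t)| ≤ |s - t| := by
  wlog h : s ≤ t generalizing s t
  · rw [abs_sub_comm, abs_sub_comm s t]; exact this t s (le_of_not_ge h)
  have ha := Real.exp_pos s
  have hb := Real.exp_pos t
  have hm : Real.exp s ≤ Real.exp t := Real.exp_le_exp.2 h
  have hc : Real.exp t * (s - t + 1) ≤ Real.exp s := by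
    have h2 := Real.add_one_le_exp (s - t)
    calc Real.exp t * (s - t + 1) ≤ Real.exp t * Real.exp (s - t) := by nlinarith
    _ = Real.exp s := by rw [← Real.exp_add]; ring_nf
  have h1 : |1/(1+Real.exp s) - 1/(1+Real.exp t)| = 1/(1+Real.exp s) - 1/(1+Real.exp t) := by
    apply abs_of_nonneg
    rw [sub_nonneg, div_le_div_iff₀ (by linarith) (by linarith)]
    nlinarith
  have h2 : |s - t| = t - s := by rw [abs_sub_comm]; exact abs_of_nonneg (by linarith)
  rw [h1, h2, div_sub_div _ _ (by positivity) (by positivity), div_le_iff₀ (by positivity)]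
  nlinarith

lemma gp_eq {E : Type*} [NormedAddCommGroup E] [InnerProductSpace ℝ E]
    (σ : ℝ) (f a b : E) :
    gaussPosterior σ f a b
      = 1 / (1 + Real.exp ((‖f - a‖ ^ 2 - ‖f - b‖ ^ 2) / (2 * σ ^ 2))) := by
  unfold gaussPosterior
  rw [div_eq_div_iff (by positivity) (by positivity)]
  rw [mul_add, mul_one, ← Real.exp_add]
  ring_nf

lemma csbm_sum_indep {E : Type*} [AddCommGroup E] [Module ℝ E] {M : Type*} [Fintype M]
    (μ1 μ2 : E) (w p : M → ℝ) (L : ℕ) (i j : M) :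
    (csbmMu μ1 μ2 w p (L+1) i).1 + (csbmMu μ1 μ2 w p (L+1) i).2
      = (csbmMu μ1 μ2 w p (L+1) j).1 + (csbmMu μ1 μ2 w p (L+1) j).2 := by
  simp only [csbmMu]
  module

lemma csbm_diff_sum {E : Type*} [AddCommGroup E] [Module ℝ E] {M : Type*} [Fintype M]
    (μ1 μ2 : E) (w p : M → ℝ) (hw1 : ∑ m, w m = 1) (r : ℝ)
    (hr : r = ∑ m, w m * (p m - (1 - p m))) (L : ℕ) :
    ∑ m, w m • ((csbmMu μ1 μ2 w p L m).1 - (csbmMu μ1 μ2 w p L m).2)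
      = r ^ L • (μ1 - μ2) := by
  induction L with
  | zero =>
    simp only [csbmMu, pow_zero, one_smul, ← Finset.sum_smul, hw1]
  | succ L ih =>
    have key : ∀ m : M, (csbmMu μ1 μ2 w p (L+1) m).1 - (csbmMu μ1 μ2 w p (L+1) m).2
        = (p m - (1 - p m)) • (r ^ L • (μ1 - μ2)) := by
      intro m
      simp only [csbmMu]
      rw [← ih]
      simp only [smul_sub, Finset.sum_sub_distrib]
      module
    simp only [key, smul_smul, ← Finset.sum_smul, ← mul_assoc]
    rw [← Finset.sum_mul, ← hr, pow_succ, mul_comm]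

lemma csbm_diff {E : Type*} [AddCommGroup E] [Module ℝ E] {M : Type*} [Fintype M]
    (μ1 μ2 : E) (w p : M → ℝ) (hw1 : ∑ m, w m = 1) (r : ℝ)
    (hr : r = ∑ m, w m * (p m - (1 - p m))) (L : ℕ) (i : M) :
    (csbmMu μ1 μ2 w p (L+1) i).1 - (csbmMu μ1 μ2 w p (L+1) i).2
      = (p i - (1 - p i)) • (r ^ L • (μ1 - μ2)) := by
  simp only [csbmMu]
  rw [← csbm_diff_sum μ1 μ2 w p hw1 r hr L]
  simp only [smul_sub, Finset.sum_sub_distrib]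
  module

lemma norm_sq_sub_norm_sq {E : Type*} [NormedAddCommGroup E] [InnerProductSpace ℝ E]
    (x y : E) : ‖x‖ ^ 2 - ‖y‖ ^ 2 = ⟪x - y, x + y⟫ := by
  rw [← real_inner_self_eq_norm_sq, ← real_inner_self_eq_norm_sq,
    inner_sub_left, inner_add_right, inner_add_right, real_inner_comm y x]
  ring

set_option maxHeartbeats 1600000 in
theorem csbm_lemma1_deterministic
    {E : Type*} [NormedAddCommGroup E] [InnerProductSpace ℝ E] {M : Type*} [Fintype M]
    (μ1 μ2 : E) (w p : M → ℝ)
    (hw : ∀ m, 0 ≤ w m) (hw1 : ∑ m, w m = 1)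
    (hp0 : ∀ m, 0 ≤ p m) (hp1 : ∀ m, p m ≤ 1)
    (σ k ρ r : ℝ) (hσ : 0 < σ) (hk : 0 ≤ k)
    (hρ : ρ = ‖μ1 - μ2‖) (hr : r = ∑ m, w m * (p m - (1 - p m)))
    (L : ℕ) (hL : 1 ≤ L) (i j : M) (fu fv : E)
    (hu1 : ‖fu - (csbmMu μ1 μ2 w p L i).1‖ ≤ ρ + k * σ)
    (hu2 : ‖fu - (csbmMu μ1 μ2 w p L i).2‖ ≤ ρ + k * σ)
    (hv1 : ‖fv - (csbmMu μ1 μ2 w p L j).1‖ ≤ ρ + k * σ)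
    (hv2 : ‖fv - (csbmMu μ1 μ2 w p L j).2‖ ≤ ρ + k * σ) :
    |gaussPosterior σ fu (csbmMu μ1 μ2 w p L i).1 (csbmMu μ1 μ2 w p L i).2
        - gaussPosterior σ fv (csbmMu μ1 μ2 w p L j).1 (csbmMu μ1 μ2 w p L j).2|
      ≤ (2 * (ρ + k * σ) / σ ^ 2) *
          (‖fu - fv‖ + ρ * |p i - p j| * |r| ^ (L - 1)) := by
  obtain ⟨L', rfl⟩ : ∃ L', L = L' + 1 :=
    ⟨L - 1, (Nat.succ_pred_eq_of_pos hL).symm⟩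
  simp only [Nat.add_sub_cancel] at *
  set ai := (csbmMu μ1 μ2 w p (L'+1) i).1 with hai
  set bi := (csbmMu μ1 μ2 w p (L'+1) i).2 with hbi
  set aj := (csbmMu μ1 μ2 w p (L'+1) j).1 with haj
  set bj := (csbmMu μ1 μ2 w p (L'+1) j).2 with hbj
  -- basic positivity facts
  have hρ0 : 0 ≤ ρ := hρ ▸ norm_nonneg _
  have hA0 : 0 ≤ ρ + k * σ := by positivity
  have hrle : |r| ≤ 1 := by
    rw [hr]
    calc |∑ m, w m * (p m - (1 - p m))| ≤ ∑ m, |w m * (p m - (1 - p m))| :=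
          Finset.abs_sum_le_sum_abs _ _
    _ ≤ ∑ m, w m := by
          apply Finset.sum_le_sum
          intro m _
          rw [abs_mul, abs_of_nonneg (hw m)]
          have : |p m - (1 - p m)| ≤ 1 := by
            rw [abs_le]; constructor <;> nlinarith [hp0 m, hp1 m]
          nlinarith [hw m]
    _ = 1 := hw1
  have hrpow : |r| ^ L' ≤ 1 := pow_le_one₀ (abs_nonneg r) hrle
  -- difference of means
  have hdi : ai - bi = (p i - (1 - p i)) • (r ^ L' • (μ1 - μ2)) :=
    csbm_diff μ1 μ2 w p hw1 r hr L' i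
  have hdj : aj - bj = (p j - (1 - p j)) • (r ^ L' • (μ1 - μ2)) :=
    csbm_diff μ1 μ2 w p hw1 r hr L' j
  have hsum : ai + bi = aj + bj := csbm_sum_indep μ1 μ2 w p L' i j
  have hndi : ‖ai - bi‖ ≤ ρ := by
    rw [hdi, norm_smul, norm_smul, norm_pow, Real.norm_eq_abs, Real.norm_eq_abs, ← hρ]
    have h1 : |p i - (1 - p i)| ≤ 1 := by
      rw [abs_le]; constructor <;> nlinarith [hp0 i, hp1 i]
    calc |p i - (1 - p i)| * (|r| ^ L' * ρ) ≤ 1 * (1 * ρ) := by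
          apply mul_le_mul h1 _ (by positivity) one_pos.le
          exact mul_le_mul hrpow le_rfl hρ0 one_pos.le
    _ = ρ := by ring
  have hndiff : ‖(ai - bi) - (aj - bj)‖ ≤ 2 * |p i - p j| * |r| ^ L' * ρ := by
    rw [hdi, hdj, ← sub_smul, norm_smul, norm_smul, norm_pow,
      Real.norm_eq_abs, Real.norm_eq_abs, ← hρ]
    have : |p i - (1 - p i) - (p j - (1 - p j))| = 2 * |p i - p j| := by
      rw [show p i - (1 - p i) - (p j - (1 - p j)) = 2 * (p i - p j) by ring,
        abs_mul, abs_two]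
    rw [this]; ring_nf; rfl
  -- the exponent arguments
  set Du : ℝ := (‖fu - ai‖ ^ 2 - ‖fu - bi‖ ^ 2) / (2 * σ ^ 2) with hDu
  set Dv : ℝ := (‖fv - aj‖ ^ 2 - ‖fv - bj‖ ^ 2) / (2 * σ ^ 2) with hDv
  have step1 : |gaussPosterior σ fu ai bi - gaussPosterior σ fv aj bj| ≤ |Du - Dv| := by
    rw [gp_eq, gp_eq]
    exact sigLip Du Dv
  -- rewrite numerators via inner products
  have hinu : ‖fu - ai‖ ^ 2 - ‖fu - bi‖ ^ 2 = ⟪bi - ai, (fu - ai) + (fu - bi)⟫ := by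
    rw [norm_sq_sub_norm_sq]
    congr 1
    abel
  have hinv : ‖fv - aj‖ ^ 2 - ‖fv - bj‖ ^ 2 = ⟪bj - aj, (fv - aj) + (fv - bj)⟫ := by
    rw [norm_sq_sub_norm_sq]
    congr 1
    abel
  -- key decomposition
  have hdec : ⟪bi - ai, (fu - ai) + (fu - bi)⟫ - ⟪bj - aj, (fv - aj) + (fv - bj)⟫
      = ⟪bi - ai, (fu - fv) + (fu - fv)⟫
        + ⟪(bi - ai) - (bj - aj), (fv - aj) + (fv - bj)⟫ := by
    have heq : (fu - ai) + (fu - bi)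
        = ((fu - fv) + (fu - fv)) + ((fv - aj) + (fv - bj)) := by
      rw [show (fu - ai) + (fu - bi)
          = ((fu - fv) + (fu - fv)) + (fv + fv - (ai + bi)) from by abel, hsum]
      abel
    rw [heq, inner_add_right]
    simp only [inner_sub_left]
    ring
  have hbound : |Du - Dv| ≤ (‖ai - bi‖ * (2 * ‖fu - fv‖)
      + ‖(ai - bi) - (aj - bj)‖ * (2 * (ρ + k * σ))) / (2 * σ ^ 2) := by
    rw [hDu, hDv, div_sub_div_same, hinu, hinv, hdec, abs_div,
      abs_of_pos (by positivity : (0:ℝ) < 2 * σ ^ 2)]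
    apply div_le_div_of_nonneg_right _ (by positivity)
    calc |⟪bi - ai, (fu - fv) + (fu - fv)⟫
          + ⟪(bi - ai) - (bj - aj), (fv - aj) + (fv - bj)⟫|
        ≤ |⟪bi - ai, (fu - fv) + (fu - fv)⟫|
          + |⟪(bi - ai) - (bj - aj), (fv - aj) + (fv - bj)⟫| := abs_add_le _ _
      _ ≤ ‖bi - ai‖ * ‖(fu - fv) + (fu - fv)‖
          + ‖(bi - ai) - (bj - aj)‖ * ‖(fv - aj) + (fv - bj)‖ := by
          gcongr <;> exact abs_real_inner_le_norm _ _
      _ ≤ ‖ai - bi‖ * (2 * ‖fu - fv‖)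
          + ‖(ai - bi) - (aj - bj)‖ * (2 * (ρ + k * σ)) := by
          rw [norm_sub_rev bi ai, show (bi - ai) - (bj - aj) = -((ai - bi) - (aj - bj)) by abel,
            norm_neg]
          gcongr
          · calc ‖(fu - fv) + (fu - fv)‖ ≤ ‖fu - fv‖ + ‖fu - fv‖ := norm_add_le _ _
              _ = 2 * ‖fu - fv‖ := by ring
          · calc ‖(fv - aj) + (fv - bj)‖ ≤ ‖fv - aj‖ + ‖fv - bj‖ := norm_add_le _ _
              _ ≤ (ρ + k * σ) + (ρ + k * σ) := add_le_add hv1 hv2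
              _ = 2 * (ρ + k * σ) := by ring
  refine step1.trans (hbound.trans ?_)
  rw [div_le_iff₀ (by positivity : (0:ℝ) < 2 * σ ^ 2)]
  have hfn : 0 ≤ ‖fu - fv‖ := norm_nonneg _
  have h1 : ‖ai - bi‖ * (2 * ‖fu - fv‖) ≤ ρ * (2 * ‖fu - fv‖) := by
    apply mul_le_mul_of_nonneg_right hndi (by positivity)
  have h2 : ‖(ai - bi) - (aj - bj)‖ * (2 * (ρ + k * σ))
      ≤ (2 * |p i - p j| * |r| ^ L' * ρ) * (2 * (ρ + k * σ)) :=
    mul_le_mul_of_nonneg_right hndiff (by positivity)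
  have hT : 0 ≤ ρ * |p i - p j| * |r| ^ L' := by positivity
  have hexp : (2 * (ρ + k * σ) / σ ^ 2) * (‖fu - fv‖ + ρ * |p i - p j| * |r| ^ L')
      * (2 * σ ^ 2) = 4 * (ρ + k * σ) * (‖fu - fv‖ + ρ * |p i - p j| * |r| ^ L') := by
    field_simp
    ring
  rw [hexp]
  have hkσ : (0:ℝ) ≤ k * σ := by positivity
  nlinarith [h1, h2, mul_nonneg (by linarith : (0:ℝ) ≤ 2 * (ρ + k * σ) - ρ) hfn]
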